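/- arXiv:2303.18209 — 3 statements merged into one kernel-verified Lean document; each statement's English description precedes it below -/
import Mathlib

section
/- Suppose the data satisfies the persistency of excitation assumption rank([X_0; U]) = mT + n. Let x̄_0 ∈ ℝ^n be any initial state, ū = vec(u(0),…,u(T−1)) ∈ ℝ^{mT} any input sequence, and x̄ = vec(x(1),…,x(T)) ∈ ℝ^{nT} the resulting state trajectory of the system (i.e., x(0) = x̄_0 and x(t+1) = A x(t) + B u(t) for t = 0,…,T−1). Then there exist vectors α and β of appropriate dimensions such that x̄ = X K_U α + X K_0 β, x̄_0 = X_0 K_U α, and ū = U K_0 β. -/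
open Matrix

/-- The full state sequence over times `0, 1, …, T` built from the initial state `x0` and the
subsequent states `x 0 = x(1), …, x (T-1) = x(T)`. -/
def stateSeq {n T : ℕ} (x0 : Fin n → ℝ) (x : Fin T → Fin n → ℝ) : Fin (T + 1) → Fin n → ℝ :=
  Fin.cases x0 x

/-- `(x0, u, x)` is a trajectory of the system `x(t+1) = A x(t) + B u(t)`. -/
def IsTrajectory {n m T : ℕ} (A : Matrix (Fin n) (Fin n) ℝ) (B : Matrix (Fin n) (Fin m) ℝ)
    (x0 : Fin n → ℝ) (u : Fin T → Fin m → ℝ) (x : Fin T → Fin n → ℝ) : Prop :=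
  ∀ t : Fin T, x t = A.mulVec (stateSeq x0 x t.castSucc) + B.mulVec (u t)

/-- The data matrices are generated by `N` experiments of length `T` on the system. -/
def DataGenerated {n m T N : ℕ} (A : Matrix (Fin n) (Fin n) ℝ) (B : Matrix (Fin n) (Fin m) ℝ)
    (X0 : Matrix (Fin n) (Fin N) ℝ) (X : Matrix (Fin T × Fin n) (Fin N) ℝ)
    (U : Matrix (Fin T × Fin m) (Fin N) ℝ) : Prop :=
  ∀ i : Fin N, IsTrajectory A B (fun j => X0 j i) (fun t j => U (t, j) i) (fun t j => X (t, j) i)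

/-- The columns of `Kb` form a basis of `Ker M`: the linear map induced by `Kb` is injective and
its range is exactly the kernel of the linear map induced by `M`. -/
def IsKerBasis {α β γ : Type*} [Fintype β] [Fintype γ]
    (M : Matrix α β ℝ) (Kb : Matrix β γ ℝ) : Prop :=
  Function.Injective Kb.mulVecLin ∧ LinearMap.range Kb.mulVecLin = LinearMap.ker M.mulVecLin


/-!
Persistency of excitation makes `[X₀; U]` surjective, so some column combination `g₁`
of the experiments has initial state `x̄₀` and zero input, and some `g₂` has zero initial state and
input `ū`; these lie in `Ker U` and `Ker X₀` respectively. By superposition the same combination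
`g₁ + g₂` of the recorded state trajectories is the trajectory of the system from `x̄₀` under `ū`,
and a trajectory is determined by its initial state and its input.
-/

theorem Matrix.mulVecLin_surjective_of_rank_eq {m n K : Type*} [Fintype m] [Fintype n] [Field K]
    (M : Matrix m n K) (h : M.rank = Fintype.card m) : Function.Surjective M.mulVecLin := by
  rw [← LinearMap.range_eq_top]
  apply Submodule.eq_top_of_finrank_eq
  rw [Module.finrank_fintype_fun_eq_card]
  exact h

theorem Matrix.exists_mulVec_fromRows_eq {m₁ m₂ n K : Type*} [Fintype m₁] [Fintype m₂]
    [Fintype n] [Field K] (M₁ : Matrix m₁ n K) (M₂ : Matrix m₂ n K)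
    (h : (fromRows M₁ M₂).rank = Fintype.card m₁ + Fintype.card m₂)
    (y₁ : m₁ → K) (y₂ : m₂ → K) : ∃ g, M₁ *ᵥ g = y₁ ∧ M₂ *ᵥ g = y₂ := by
  obtain ⟨g, hg⟩ := (fromRows M₁ M₂).mulVecLin_surjective_of_rank_eq
    (h.trans (Fintype.card_sum).symm) (Sum.elim y₁ y₂)
  rw [mulVecLin_apply, fromRows_mulVec, Sum.elim_eq_iff] at hg
  exact ⟨g, hg⟩

theorem IsKerBasis.exists_mulVec_eq {α β γ : Type*} [Fintype β] [Fintype γ]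
    {M : Matrix α β ℝ} {Kb : Matrix β γ ℝ} (h : IsKerBasis M Kb) {v : β → ℝ}
    (hv : M *ᵥ v = 0) : ∃ a, Kb *ᵥ a = v :=
  (h.2 ▸ LinearMap.mem_ker.2 hv : v ∈ LinearMap.range Kb.mulVecLin)

section Trajectory

variable {n m T : ℕ} {A : Matrix (Fin n) (Fin n) ℝ} {B : Matrix (Fin n) (Fin m) ℝ}

@[simp]
theorem stateSeq_succ (x0 : Fin n → ℝ) (x : Fin T → Fin n → ℝ) (t : Fin T) :
    stateSeq x0 x t.succ = x t :=
  rfl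

theorem stateSeq_add (x0 y0 : Fin n → ℝ) (x y : Fin T → Fin n → ℝ) :
    stateSeq (x0 + y0) (x + y) = stateSeq x0 x + stateSeq y0 y := by
  funext s
  cases s using Fin.cases <;> rfl

theorem stateSeq_smul (c : ℝ) (x0 : Fin n → ℝ) (x : Fin T → Fin n → ℝ) :
    stateSeq (c • x0) (c • x) = c • stateSeq x0 x := by
  funext s
  cases s using Fin.cases <;> rfl

theorem stateSeq_zero_zero : stateSeq (0 : Fin n → ℝ) (0 : Fin T → Fin n → ℝ) = 0 := by
  funext s
  cases s using Fin.cases <;> rfl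

theorem isTrajectory_zero : IsTrajectory A B 0 (0 : Fin T → Fin m → ℝ) 0 := by
  intro t
  simp [stateSeq_zero_zero]

theorem IsTrajectory.add {x0 y0 : Fin n → ℝ} {u v : Fin T → Fin m → ℝ} {x y : Fin T → Fin n → ℝ}
    (hx : IsTrajectory A B x0 u x) (hy : IsTrajectory A B y0 v y) :
    IsTrajectory A B (x0 + y0) (u + v) (x + y) := by
  intro t
  rw [stateSeq_add, Pi.add_apply, Pi.add_apply, Pi.add_apply, hx t, hy t, mulVec_add, mulVec_add]
  abel

theorem IsTrajectory.smul {x0 : Fin n → ℝ} {u : Fin T → Fin m → ℝ} {x : Fin T → Fin n → ℝ}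
    (hx : IsTrajectory A B x0 u x) (c : ℝ) : IsTrajectory A B (c • x0) (c • u) (c • x) := by
  intro t
  rw [stateSeq_smul, Pi.smul_apply, Pi.smul_apply, Pi.smul_apply, hx t, mulVec_smul, mulVec_smul,
    smul_add]

theorem IsTrajectory.sum {ι : Type*} (s : Finset ι) {x0 : ι → Fin n → ℝ}
    {u : ι → Fin T → Fin m → ℝ} {x : ι → Fin T → Fin n → ℝ}
    (h : ∀ i ∈ s, IsTrajectory A B (x0 i) (u i) (x i)) :
    IsTrajectory A B (∑ i ∈ s, x0 i) (∑ i ∈ s, u i) (∑ i ∈ s, x i) := by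
  classical
  induction s using Finset.induction_on with
  | empty => exact isTrajectory_zero
  | insert i s hi ih =>
    simp only [Finset.sum_insert hi]
    exact (h i (s.mem_insert_self i)).add (ih fun j hj => h j (Finset.mem_insert_of_mem hj))

theorem IsTrajectory.unique {x0 : Fin n → ℝ} {u : Fin T → Fin m → ℝ} {x x' : Fin T → Fin n → ℝ}
    (hx : IsTrajectory A B x0 u x) (hx' : IsTrajectory A B x0 u x') : x = x' := by
  have hseq : ∀ s, stateSeq x0 x s = stateSeq x0 x' s := by
    intro s
    induction s using Fin.induction with
    | zero => rfl
    | succ t ih => rw [stateSeq_succ, stateSeq_succ, hx t, hx' t, ih]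
  exact funext fun t => hseq t.succ

theorem DataGenerated.isTrajectory_mulVec {N : ℕ} {X0 : Matrix (Fin n) (Fin N) ℝ}
    {X : Matrix (Fin T × Fin n) (Fin N) ℝ} {U : Matrix (Fin T × Fin m) (Fin N) ℝ}
    (hdata : DataGenerated A B X0 X U) (c : Fin N → ℝ) :
    IsTrajectory A B (X0 *ᵥ c) (Function.curry (U *ᵥ c)) (Function.curry (X *ᵥ c)) := by
  have hcols := IsTrajectory.sum Finset.univ fun i _ => (hdata i).smul (c i)
  convert hcols using 1 <;> ext <;> simp [mulVec, dotProduct, Finset.sum_apply, mul_comm]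

end Trajectory

/-- Under persistency of excitation, every trajectory `(x̄0, ū, x̄)` of the
system can be written as `x̄ = X K_U α + X K_0 β`, `x̄0 = X₀ K_U α`, `ū = U K_0 β`. -/
theorem stmt1 {n m T N p q : ℕ}
    (A : Matrix (Fin n) (Fin n) ℝ) (B : Matrix (Fin n) (Fin m) ℝ)
    (X0 : Matrix (Fin n) (Fin N) ℝ) (X : Matrix (Fin T × Fin n) (Fin N) ℝ)
    (U : Matrix (Fin T × Fin m) (Fin N) ℝ)
    (hdata : DataGenerated A B X0 X U)
    (KU : Matrix (Fin N) (Fin p) ℝ) (K0 : Matrix (Fin N) (Fin q) ℝ)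
    (hKU : IsKerBasis U KU) (hK0 : IsKerBasis X0 K0)
    (hPE : (Matrix.fromRows X0 U).rank = m * T + n)
    (x0bar : Fin n → ℝ) (ubar : Fin T → Fin m → ℝ) (xbar : Fin T → Fin n → ℝ)
    (htraj : IsTrajectory A B x0bar ubar xbar) :
    ∃ (α : Fin p → ℝ) (β : Fin q → ℝ),
      (∀ t j, xbar t j = X.mulVec (KU.mulVec α) (t, j) + X.mulVec (K0.mulVec β) (t, j)) ∧
      x0bar = X0.mulVec (KU.mulVec α) ∧
      (∀ t j, ubar t j = U.mulVec (K0.mulVec β) (t, j)) := by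
  have hrank : (fromRows X0 U).rank = Fintype.card (Fin n) + Fintype.card (Fin T × Fin m) := by
    simp only [hPE, Fintype.card_fin, Fintype.card_prod]
    ring
  obtain ⟨g₁, hX0g₁, hUg₁⟩ := X0.exists_mulVec_fromRows_eq U hrank x0bar 0
  obtain ⟨g₂, hX0g₂, hUg₂⟩ := X0.exists_mulVec_fromRows_eq U hrank 0 (Function.uncurry ubar)
  obtain ⟨α, rfl⟩ := hKU.exists_mulVec_eq hUg₁
  obtain ⟨β, rfl⟩ := hK0.exists_mulVec_eq hX0g₂
  have hcomb := hdata.isTrajectory_mulVec (KU *ᵥ α + K0 *ᵥ β)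
  rw [mulVec_add, mulVec_add, hX0g₁, hX0g₂, hUg₁, hUg₂, zero_add, add_zero,
    Function.curry_uncurry] at hcomb
  have hxbar := htraj.unique hcomb
  refine ⟨α, β, fun t j => ?_, hX0g₁.symm, fun t j => by rw [hUg₂]; rfl⟩
  rw [hxbar, mulVec_add]
  rfl
end

section
/- Let the data matrices X_0, X, U be generated by the system with experiments of length T = 1 (so X ∈ ℝ^{n×N}, U ∈ ℝ^{m×N}, and each column satisfies X e_i = A X_0 e_i + B U e_i), and suppose the persistency of excitation assumption rank([X_0; U]) = m + n holds. Let λ_1,…,λ_n ∈ ℝ and let v_1,…,v_n ∈ ℝ^n be linearly independent. Suppose that for each i there exist vectors α_i, β_i with (X K_U − λ_i X_0 K_U) α_i + X K_0 β_i = 0 and X_0 K_U α_i = v_i. Then the n×n matrix M := X_0 K_U [α_1 … α_n] is invertible, and the feedback gain K := −U K_0 [β_1 … β_n] M^{−1} satisfies (A − B K) v_i = λ_i v_i for every i ∈ {1,…,n}; in particular, A − B K has eigenvalues λ_1,…,λ_n with corresponding eigenvectors v_1,…,v_n. -/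
open Matrix

/-
The constraint `X₀ K_U α_i = v_i` makes the columns of `M` the independent vectors `v_i`, so `M`
is invertible, and `M⁻¹ v_i = e_i` gives `K v_i = -w_i` with `w_i := U K₀ β_i`.
Along `K_U` the input vanishes and along `K₀` the initial state vanishes, so substituting
`X = A X₀ + B U` into the kernel equation leaves `A v_i - λ_i v_i + B w_i = 0`,
which is `(A - B K) v_i = λ_i v_i`.
-/

theorem IsKerBasis.mulVec_mulVec_eq_zero {α β γ : Type*} [Fintype β] [Fintype γ]
    {M : Matrix α β ℝ} {Kb : Matrix β γ ℝ} (h : IsKerBasis M Kb) (x : γ → ℝ) :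
    M *ᵥ (Kb *ᵥ x) = 0 := by
  have hx : Kb.mulVecLin x ∈ LinearMap.ker M.mulVecLin := h.2 ▸ LinearMap.mem_range_self _ x
  simpa using hx

theorem Matrix.mul_inv_mulVec_col {ι κ K : Type*} [Fintype ι] [DecidableEq ι] [CommRing K]
    {M : Matrix ι ι K} (hM : IsUnit M) (W : Matrix κ ι K) (i : ι) :
    (W * M⁻¹) *ᵥ M.col i = W.col i := by
  rw [← mulVec_single_one M, mulVec_mulVec,
    nonsing_inv_mul_cancel_right M W ((isUnit_iff_isUnit_det M).mp hM), mulVec_single_one]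

theorem closedLoop_mulVec_col {ι μ K : Type*} [Fintype ι] [DecidableEq ι] [Fintype μ]
    [CommRing K] (A : Matrix ι ι K) (B : Matrix ι μ K) {M : Matrix ι ι K} (hM : IsUnit M)
    (W : Matrix μ ι K) (i : ι) :
    (A - B * (-W * M⁻¹)) *ᵥ M.col i = A *ᵥ M.col i + B *ᵥ W.col i := by
  rw [sub_mulVec, Matrix.neg_mul, Matrix.mul_neg, neg_mulVec, sub_neg_eq_add, ← mulVec_mulVec,
    mul_inv_mulVec_col hM]

theorem eigen_relation_of_data {ι μ ν π ρ : Type*} [Fintype ι] [Fintype μ] [Fintype ν]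
    [Fintype π] [Fintype ρ] {A : Matrix ι ι ℝ} {B : Matrix ι μ ℝ}
    {X0 X : Matrix ι ν ℝ} {U : Matrix μ ν ℝ} (hdata : X = A * X0 + B * U)
    {KU : Matrix ν π ℝ} {K0 : Matrix ν ρ ℝ} (hKU : IsKerBasis U KU) (hK0 : IsKerBasis X0 K0)
    (lam : ℝ) (a : π → ℝ) (b : ρ → ℝ)
    (hker : X *ᵥ (KU *ᵥ a) - lam • X0 *ᵥ (KU *ᵥ a) + X *ᵥ (K0 *ᵥ b) = 0) :
    A *ᵥ (X0 *ᵥ (KU *ᵥ a)) + B *ᵥ (U *ᵥ (K0 *ᵥ b)) = lam • X0 *ᵥ (KU *ᵥ a) := by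
  have hX (z : ν → ℝ) : X *ᵥ z = A *ᵥ (X0 *ᵥ z) + B *ᵥ (U *ᵥ z) := by
    rw [hdata, add_mulVec, mulVec_mulVec, mulVec_mulVec]
  rw [hX, hX, hKU.mulVec_mulVec_eq_zero, hK0.mulVec_mulVec_eq_zero] at hker
  simp only [mulVec_zero, add_zero, zero_add] at hker
  rw [← sub_eq_zero, ← hker]
  abel

theorem stmt10_general {n m N p q : ℕ}
    (A : Matrix (Fin n) (Fin n) ℝ) (B : Matrix (Fin n) (Fin m) ℝ)
    (X0 : Matrix (Fin n) (Fin N) ℝ) (X : Matrix (Fin n) (Fin N) ℝ)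
    (U : Matrix (Fin m) (Fin N) ℝ)
    (hdata : X = A * X0 + B * U)
    (KU : Matrix (Fin N) (Fin p) ℝ) (K0 : Matrix (Fin N) (Fin q) ℝ)
    (hKU : IsKerBasis U KU) (hK0 : IsKerBasis X0 K0)
    (lam : Fin n → ℝ) (v : Fin n → Fin n → ℝ) (hindep : LinearIndependent ℝ v)
    (α : Fin n → Fin p → ℝ) (β : Fin n → Fin q → ℝ)
    (hker : ∀ i, X.mulVec (KU.mulVec (α i)) - lam i • X0.mulVec (KU.mulVec (α i)) +
      X.mulVec (K0.mulVec (β i)) = 0)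
    (hv : ∀ i, X0.mulVec (KU.mulVec (α i)) = v i) :
    IsUnit (Matrix.of fun r i => X0.mulVec (KU.mulVec (α i)) r) ∧
      ∀ i, (A - B * (-(Matrix.of fun r i => U.mulVec (K0.mulVec (β i)) r) *
          (Matrix.of fun r i => X0.mulVec (KU.mulVec (α i)) r)⁻¹)).mulVec (v i) =
        lam i • v i := by
  have hM : IsUnit (Matrix.of fun r i => (X0 *ᵥ (KU *ᵥ α i)) r) := by
    simp only [hv]
    exact linearIndependent_cols_iff_isUnit.mp hindep
  refine ⟨hM, fun i => ?_⟩
  rw [← hv i]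
  exact (closedLoop_mulVec_col A B hM _ i).trans
    (eigen_relation_of_data hdata hKU hK0 (lam i) (α i) (β i) (hker i))

/-- (Closed-form data-driven eigenstructure assignment, `T = 1` data.)
If the data `X = A X₀ + B U` is persistently exciting, `v_1, …, v_n` are linearly independent,
and for each `i` there are `α_i, β_i` with `(X K_U − λ_i X₀ K_U) α_i + X K₀ β_i = 0` and
`X₀ K_U α_i = v_i`, then `M := X₀ K_U [α_1 ⋯ α_n]` is invertible and
`K := −U K₀ [β_1 ⋯ β_n] M⁻¹` satisfies `(A − B K) v_i = λ_i v_i` for all `i`. -/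
theorem stmt10 {n m N p q : ℕ}
    (A : Matrix (Fin n) (Fin n) ℝ) (B : Matrix (Fin n) (Fin m) ℝ)
    (X0 : Matrix (Fin n) (Fin N) ℝ) (X : Matrix (Fin n) (Fin N) ℝ)
    (U : Matrix (Fin m) (Fin N) ℝ)
    (hdata : X = A * X0 + B * U)
    (KU : Matrix (Fin N) (Fin p) ℝ) (K0 : Matrix (Fin N) (Fin q) ℝ)
    (hKU : IsKerBasis U KU) (hK0 : IsKerBasis X0 K0)
    (hPE : (Matrix.fromRows X0 U).rank = m + n)
    (lam : Fin n → ℝ) (v : Fin n → Fin n → ℝ) (hindep : LinearIndependent ℝ v)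
    (α : Fin n → Fin p → ℝ) (β : Fin n → Fin q → ℝ)
    (hker : ∀ i, X.mulVec (KU.mulVec (α i)) - lam i • X0.mulVec (KU.mulVec (α i)) +
      X.mulVec (K0.mulVec (β i)) = 0)
    (hv : ∀ i, X0.mulVec (KU.mulVec (α i)) = v i) :
    IsUnit (Matrix.of fun r i => X0.mulVec (KU.mulVec (α i)) r) ∧
      ∀ i, (A - B * (-(Matrix.of fun r i => U.mulVec (K0.mulVec (β i)) r) *
          (Matrix.of fun r i => X0.mulVec (KU.mulVec (α i)) r)⁻¹)).mulVec (v i) =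
        lam i • v i :=
  stmt10_general A B X0 X U hdata KU K0 hKU hK0 lam v hindep α β hker hv
end

section
/- Let A ∈ ℝ^{n×n} and B ∈ ℝ^{n×m} with rank(B) = m. Let λ_1,…,λ_n ∈ ℝ and let v_1,…,v_n ∈ ℝ^n be linearly independent vectors such that, for each i, (λ_i I − A) v_i ∈ Im(B) (i.e., each v_i lies in the allowable eigenvector subspace associated with λ_i). Then there exists a unique matrix K ∈ ℝ^{m×n} such that (A − B K) v_i = λ_i v_i for all i ∈ {1,…,n}. -/
/-!
Full column rank makes `B` injective, so `(A - B K) vᵢ = λᵢ vᵢ` is equivalent to `K vᵢ = -wᵢ`,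
where `(λᵢ I - A) vᵢ = B wᵢ`. Since the `vᵢ` form a basis, exactly one `K` takes these values.
-/

open Matrix

namespace Matrix

variable {R : Type*} {m n ι : Type*} [Fintype n]

theorem mulVec_injective_of_rank_eq_card [Field R] (B : Matrix m n R)
    (hB : B.rank = Fintype.card n) : Function.Injective B.mulVec := by
  rw [mulVec_injective_iff, linearIndependent_iff_card_eq_finrank_span, Set.finrank,
    ← rank_eq_finrank_span_cols, hB]

theorem bijective_mulVec_comp_of_linearIndependent [Field R] [Fintype ι] [DecidableEq n]
    {v : ι → n → R} (hv : LinearIndependent R v) (hcard : Fintype.card ι = Fintype.card n) :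
    Function.Bijective fun K : Matrix m n R => fun i => K *ᵥ v i := by
  let b := basisOfLinearIndependentOfCardEqFinrank' v hv (by simp [hcard])
  convert ((b.constr R).symm.bijective.comp (toLin' : Matrix m n R ≃ₗ[R] _).bijective) using 1
  ext K i : 2
  simp [b]

theorem sub_mul_mulVec_eq_smul_iff [CommRing R] [Fintype m] [DecidableEq n]
    {A : Matrix n n R} {B : Matrix n m R} (hB : Function.Injective B.mulVec)
    (K : Matrix m n R) {lam : R} {v : n → R} {w : m → R}
    (hw : (lam • (1 : Matrix n n R) - A) *ᵥ v = B *ᵥ w) :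
    (A - B * K) *ᵥ v = lam • v ↔ K *ᵥ v = -w := by
  rw [sub_mulVec, smul_mulVec, one_mulVec] at hw
  rw [← hB.eq_iff, mulVec_neg, ← hw, sub_mulVec, ← mulVec_mulVec]
  constructor <;> intro h
  · rw [← h]; abel
  · rw [h]; abel

end Matrix

/-- (Uniqueness of feedback for eigenstructure assignment.)
If `rank B = m`, `v_1, …, v_n` are linearly independent, and each `v_i` lies in the allowable
eigenvector subspace associated with `λ_i` (i.e. `(λ_i I − A) v_i ∈ Im(B)`), then there is a
unique `K` such that `(A − B K) v_i = λ_i v_i` for all `i`. -/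
theorem stmt11 {n m : ℕ}
    (A : Matrix (Fin n) (Fin n) ℝ) (B : Matrix (Fin n) (Fin m) ℝ)
    (hB : B.rank = m)
    (lam : Fin n → ℝ) (v : Fin n → Fin n → ℝ) (hindep : LinearIndependent ℝ v)
    (hallow : ∀ i, ∃ w : Fin m → ℝ,
      (lam i • (1 : Matrix (Fin n) (Fin n) ℝ) - A).mulVec (v i) = B.mulVec w) :
    ∃! K : Matrix (Fin m) (Fin n) ℝ,
      ∀ i, (A - B * K).mulVec (v i) = lam i • v i := by
  choose w hw using hallow
  have hBinj := B.mulVec_injective_of_rank_eq_card (by rw [hB, Fintype.card_fin])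
  have hKv := bijective_mulVec_comp_of_linearIndependent (m := Fin m) hindep rfl
  simp only [fun K i => sub_mul_mulVec_eq_smul_iff hBinj K (hw i), ← funext_iff]
  exact hKv.existsUnique _
end
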